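/- For independent nonnegative random variables γ_s and γ_e with CDFs F_s, F_e (γ_s having a density f_s), the expectation E[max(0, log₂((1+γ_s)/(1+γ_e)))] equals (1/ln 2) ∫₀^∞ F_e(x)(1 − F_s(x))/(1+x) dx. -/

import Mathlib

/-!
Since `log (1 + s) - log (1 + e) = ∫_{[e, s)} dx / (1 + x)` and `ENNReal.ofReal` truncates at `0`
(so the identity also covers `s ≤ e`), Tonelli turns the expected positive part into
`∫ P(γe ≤ x < γs) dx / (1 + x)`, and independence factors that probability as
`F_e(x) (1 - F_s(x))`.
-/

open MeasureTheory ProbabilityTheory Real Set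
open scoped ENNReal

theorem lintegral_setLIntegral_Ico_eq_of_indepFun {Ω : Type*} [MeasurableSpace Ω]
    {P : Measure Ω} [SFinite P] {X Y : Ω → ℝ} (hX : Measurable X) (hY : Measurable Y)
    (hXY : IndepFun X Y P) {μ : Measure ℝ} [SFinite μ] {g : ℝ → ℝ≥0∞} (hg : Measurable g) :
    ∫⁻ ω, ∫⁻ x in Ico (Y ω) (X ω), g x ∂μ ∂P
      = ∫⁻ x, P {ω | x < X ω} * P {ω | Y ω ≤ x} * g x ∂μ := by
  set E : Set (Ω × ℝ) := {p | p.2 ∈ Ico (Y p.1) (X p.1)}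
  have hE : MeasurableSet E :=
    (measurableSet_le (hY.comp measurable_fst) measurable_snd).inter
      (measurableSet_lt measurable_snd (hX.comp measurable_fst))
  have hslice (x : ℝ) : {ω | (ω, x) ∈ E} = X ⁻¹' Ioi x ∩ Y ⁻¹' Iic x := by
    ext; simp [E, and_comm]
  calc ∫⁻ ω, ∫⁻ x in Ico (Y ω) (X ω), g x ∂μ ∂P
      = ∫⁻ ω, ∫⁻ x, E.indicator (g ∘ Prod.snd) (ω, x) ∂μ ∂P := by
        simp_rw [← lintegral_indicator measurableSet_Ico]; rfl
    _ = ∫⁻ x, ∫⁻ ω, E.indicator (g ∘ Prod.snd) (ω, x) ∂P ∂μ :=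
        lintegral_lintegral_swap ((hg.comp measurable_snd).indicator hE).aemeasurable
    _ = ∫⁻ x, P {ω | (ω, x) ∈ E} * g x ∂μ := lintegral_congr fun x =>
        (lintegral_indicator_const (measurable_prodMk_right hE) (g x)).trans (mul_comm _ _)
    _ = _ := by
        simp_rw [hslice, hXY.measure_inter_preimage_eq_mul _ _ measurableSet_Ioi measurableSet_Iic]
        rfl

theorem lintegral_Ico_inv_one_add {e s : ℝ} (he : -1 < e) (hs : -1 < s) :
    ∫⁻ x in Ico e s, ENNReal.ofReal (1 + x)⁻¹ = ENNReal.ofReal (log (1 + s) - log (1 + e)) := by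
  rcases le_or_gt s e with hse | hes
  · rw [Ico_eq_empty hse.not_gt, Measure.restrict_empty, lintegral_zero_measure, eq_comm,
      ENNReal.ofReal_eq_zero, sub_nonpos]
    exact log_le_log (by linarith) (by linarith)
  have hpos : ∀ x ∈ Icc e s, 0 < 1 + x := fun x hx => by linarith [hx.1]
  have hint : IntegrableOn (fun x : ℝ => (1 + x)⁻¹) (Ioc e s) :=
    (ContinuousOn.inv₀ (by fun_prop) fun x hx => (hpos x hx).ne').integrableOn_Icc.mono_set
      Ioc_subset_Icc_self
  rw [setLIntegral_congr Ico_ae_eq_Ioc, ← ofReal_integral_eq_lintegral_ofReal hint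
    ((ae_restrict_iff' measurableSet_Ioc).2 (ae_of_all _ fun x hx =>
      (inv_pos.2 (hpos x (Ioc_subset_Icc_self hx))).le)),
    ← intervalIntegral.integral_of_le hes.le,
    intervalIntegral.integral_comp_add_left (fun x => x⁻¹),
    integral_inv_of_pos (by linarith) (by linarith), log_div (by linarith) (by linarith)]

theorem integral_max_zero_logb_div {Ω : Type*} [MeasurableSpace Ω] (P : Measure Ω)
    {X Y : Ω → ℝ} (hX : Measurable X) (hY : Measurable Y) (hX0 : ∀ ω, X ω ≠ 0)
    (hY0 : ∀ ω, Y ω ≠ 0) {b : ℝ} (hb : 1 ≤ b) :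
    ∫ ω, max 0 (logb b (X ω / Y ω)) ∂P
      = 1 / log b * (∫⁻ ω, ENNReal.ofReal (log (X ω) - log (Y ω)) ∂P).toReal := by
  rw [← integral_toReal (by fun_prop) (ae_of_all _ fun _ => ENNReal.ofReal_lt_top),
    ← integral_const_mul]
  refine integral_congr_ae (ae_of_all _ fun ω => ?_)
  dsimp only
  rw [ENNReal.toReal_ofReal', logb, log_div (hX0 ω) (hY0 ω), max_comm,
    mul_max_of_nonneg _ _ (one_div_nonneg.2 (log_nonneg hb)), mul_zero, one_div_mul_eq_div]

theorem integral_cdf_mul_one_sub_cdf_mul {Ω : Type*} [MeasurableSpace Ω] {P : Measure Ω}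
    [IsProbabilityMeasure P] {X Y : Ω → ℝ} (hX : Measurable X) {μ : Measure ℝ} {h : ℝ → ℝ}
    (hh : Measurable h) (hh0 : 0 ≤ᵐ[μ] h) :
    ∫ x, (P {ω | Y ω ≤ x}).toReal * (1 - (P {ω | X ω ≤ x}).toReal) * h x ∂μ
      = (∫⁻ x, P {ω | x < X ω} * P {ω | Y ω ≤ x} * ENNReal.ofReal (h x) ∂μ).toReal := by
  have hS : Antitone fun x => P {ω | x < X ω} := fun _ _ hxy => measure_mono fun _ hω =>
    hxy.trans_lt hω
  have hC : Monotone fun x => P {ω | Y ω ≤ x} := fun _ _ hxy => measure_mono fun _ hω =>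
    hω.trans hxy
  have hmeas : Measurable fun x => P {ω | x < X ω} * P {ω | Y ω ≤ x} * ENNReal.ofReal (h x) :=
    (hS.measurable.mul hC.measurable).mul hh.ennreal_ofReal
  rw [← integral_toReal hmeas.aemeasurable (ae_of_all _ fun x => ENNReal.mul_lt_top
    (ENNReal.mul_lt_top (measure_lt_top _ _) (measure_lt_top _ _)) ENNReal.ofReal_lt_top)]
  refine integral_congr_ae (hh0.mono fun x hx => ?_)
  have hcompl : {ω | x < X ω} = {ω | X ω ≤ x}ᶜ := by ext; simp
  dsimp only
  rw [hcompl, prob_compl_eq_one_sub (s := {ω | X ω ≤ x}) (hX measurableSet_Iic),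
    ENNReal.toReal_mul, ENNReal.toReal_mul,
    ENNReal.toReal_sub_of_le prob_le_one ENNReal.one_ne_top, ENNReal.toReal_one,
    ENNReal.toReal_ofReal hx]
  ring

theorem ergodic_secrecy_capacity_formula_general
    {Ω : Type*} [MeasurableSpace Ω] (P : Measure Ω) [IsProbabilityMeasure P]
    (γs γe : Ω → ℝ) (hγs : Measurable γs) (hγe : Measurable γe)
    (hγs0 : ∀ ω, 0 ≤ γs ω) (hγe0 : ∀ ω, 0 ≤ γe ω)
    (hindep : IndepFun γs γe P) :
    ∫ ω, max 0 (Real.logb 2 ((1 + γs ω) / (1 + γe ω))) ∂P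
      = (1 / Real.log 2) *
        ∫ x in Set.Ioi (0:ℝ),
          (P {ω | γe ω ≤ x}).toReal * (1 - (P {ω | γs ω ≤ x}).toReal) / (1 + x) := by
  have hlayer (ω : Ω) : ENNReal.ofReal (log (1 + γs ω) - log (1 + γe ω))
      = ∫⁻ x in Ico (γe ω) (γs ω), ENNReal.ofReal (1 + x)⁻¹ ∂volume.restrict (Ici 0) := by
    rw [Measure.restrict_restrict measurableSet_Ico,
      inter_eq_left.2 (Ico_subset_Ici_self.trans (Ici_subset_Ici.2 (hγe0 ω))),
      lintegral_Ico_inv_one_add (by linarith [hγe0 ω]) (by linarith [hγs0 ω])]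
  have hinv : 0 ≤ᵐ[volume.restrict (Ici 0)] fun x : ℝ => (1 + x)⁻¹ :=
    (ae_restrict_iff' measurableSet_Ici).2 (ae_of_all _ fun x (hx : 0 ≤ x) => by positivity)
  rw [integral_max_zero_logb_div P (X := fun ω => 1 + γs ω) (Y := fun ω => 1 + γe ω)
      (by fun_prop) (by fun_prop) (fun ω => (by linarith [hγs0 ω] : 0 < 1 + γs ω).ne')
      (fun ω => (by linarith [hγe0 ω] : 0 < 1 + γe ω).ne') one_le_two,
    ← integral_Ici_eq_integral_Ioi]
  simp_rw [div_eq_mul_inv _ (1 + _ : ℝ)]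
  rw [integral_cdf_mul_one_sub_cdf_mul hγs (by fun_prop) hinv, lintegral_congr hlayer,
    lintegral_setLIntegral_Ico_eq_of_indepFun hγs hγe hindep (by fun_prop)]

theorem ergodic_secrecy_capacity_formula
    {Ω : Type*} [MeasurableSpace Ω] (P : Measure Ω) [IsProbabilityMeasure P]
    (γs γe : Ω → ℝ) (hγs : Measurable γs) (hγe : Measurable γe)
    (hγs0 : ∀ ω, 0 ≤ γs ω) (hγe0 : ∀ ω, 0 ≤ γe ω)
    (hindep : IndepFun γs γe P)
    (fs : ℝ → ℝ) (hfs0 : ∀ x, 0 ≤ fs x)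
    (hdens : Measure.map γs P = volume.withDensity (fun x => ENNReal.ofReal (fs x))) :
    ∫ ω, max 0 (Real.logb 2 ((1 + γs ω) / (1 + γe ω))) ∂P
      = (1 / Real.log 2) *
        ∫ x in Set.Ioi (0:ℝ),
          (P {ω | γe ω ≤ x}).toReal * (1 - (P {ω | γs ω ≤ x}).toReal) / (1 + x) :=
  ergodic_secrecy_capacity_formula_general P γs γe hγs hγe hγs0 hγe0 hindep
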